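/- arXiv:1407.7262 — 2 statements merged into one kernel-verified Lean document; each statement's English description precedes it below -/
import Mathlib

section
/- Let B_w be the unilateral weighted backward shift on ℓ¹ with weight sequence w_k = ln(k+2)/ln(k+1). Then B_w is hypercyclic on ℓ¹ (since w_1 w_2 ⋯ w_k = ln(k+2)/ln 2 → ∞), but B_w is not q-frequently hypercyclic on ℓ¹ in the norm topology for any positive integer q. -/
open Filter Set
open scoped ENNReal

/-- The `q`-lower density of a set `A ⊆ ℕ`:
`liminf_{N→∞} card {n ∈ A : n ≤ N^q} / N`. -/
noncomputable def qLowerDensity (q : ℕ) (A : Set ℕ) : ℝ≥0∞ :=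
  Filter.atTop.liminf fun N : ℕ => (Set.ncard {n ∈ A | n ≤ N ^ q} : ℝ≥0∞) / (N : ℝ≥0∞)

/-- `T` is `q`-frequently hypercyclic. -/
def qFrequentlyHypercyclic {X : Type*} [TopologicalSpace X] (q : ℕ) (T : X → X) : Prop :=
  ∃ x : X, ∀ U : Set X, IsOpen U → U.Nonempty →
    0 < qLowerDensity q {n : ℕ | T^[n] x ∈ U}

/-- `T` is hypercyclic: some orbit is dense. -/
def Hypercyclic {X : Type*} [TopologicalSpace X] (T : X → X) : Prop :=
  ∃ x : X, Dense (Set.range fun n : ℕ => T^[n] x)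

/-!
Put `W n = w 1 * ⋯ * w n = log (n + 2) / log 2`; then `T^n` acts on coordinates by
`W j * (T^n x) j = W (j + n) * x (j + n)`.

Since `W n → ∞`, a finitely supported `u` plus a small vector carried by the coordinates
`n, …, n + m - 1` is sent by `T^n` onto any prescribed `v` supported in `[0, m)`; hence `T` is
topologically transitive and Birkhoff's theorem on the separable Banach space `ℓ¹` yields a dense
orbit.

If `T^n x` lies within `1/2` of `e₀`, then `‖x n‖ > 1 / (2 W n) ≍ 1 / log n`. A set of positive
`q`-lower density has `≳ N` elements below `N^q`, each contributing `≳ 1 / ((q + 1) log N)` to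
`‖x‖₁`, and `N / log N → ∞`, so no `x ∈ ℓ¹` can visit the ball that often.
-/

open Topology TopologicalSpace
open scoped lp

theorem exists_dense_orbit_of_transitive {X : Type*} [TopologicalSpace X] [BaireSpace X]
    [SecondCountableTopology X] [Nonempty X] {f : X → X} (hf : Continuous f)
    (htrans : ∀ U V : Set X, IsOpen U → U.Nonempty → IsOpen V → V.Nonempty →
      ∃ n, (U ∩ f^[n] ⁻¹' V).Nonempty) :
    ∃ x, Dense (range fun n => f^[n] x) := by
  obtain ⟨B, hBc, hB₀, hB⟩ := exists_countable_basis X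
  have hBne : ∀ V ∈ B, V.Nonempty := fun V hV =>
    nonempty_iff_ne_empty.2 (ne_of_mem_of_not_mem hV hB₀)
  have hvisit : ∀ V ∈ B, Dense (⋃ n, f^[n] ⁻¹' V) := fun V hV =>
    dense_iff_inter_open.2 fun U hU hU₀ => by
      simpa only [inter_iUnion, nonempty_iUnion] using
        htrans U V hU hU₀ (hB.isOpen hV) (hBne V hV)
  obtain ⟨x, hx⟩ := (dense_biInter_of_isOpen
    (fun V hV => isOpen_iUnion fun n => (hB.isOpen hV).preimage (hf.iterate n)) hBc hvisit).nonempty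
  refine ⟨x, hB.dense_iff.2 fun V hV _ => ?_⟩
  obtain ⟨n, hn⟩ := mem_iUnion.1 (mem_iInter₂.1 hx V hV)
  exact ⟨_, hn, n, rfl⟩

theorem lp.separableSpace {α 𝕜 : Type*} [Countable α] [DecidableEq α] [NormedField 𝕜]
    [SeparableSpace 𝕜] {p : ℝ≥0∞} [Fact (1 ≤ p)] (hp : p ≠ ⊤) : SeparableSpace ℓ^p(α, 𝕜) := by
  set S : Set ℓ^p(α, 𝕜) := range fun i => lp.single p i 1
  have hdense : Dense (Submodule.span 𝕜 S : Set ℓ^p(α, 𝕜)) := fun x =>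
    mem_closure_of_tendsto (lp.hasSum_single hp x) <| Eventually.of_forall fun s => by
      refine Submodule.sum_mem _ fun i _ => ?_
      have h₁ : lp.single p i (1 : 𝕜) ∈ Submodule.span 𝕜 S := Submodule.subset_span ⟨i, rfl⟩
      simpa [← lp.single_smul] using Submodule.smul_mem _ (x i) h₁
  have := ((countable_range _ : S.Countable).isSeparable.span (R := 𝕜)).closure
  rwa [hdense.closure_eq, isSeparable_univ_iff] at this

theorem Real.log_natCast_add_two_pos (n : ℕ) : 0 < Real.log (n + 2) :=
  Real.log_pos (by linarith [(n.cast_nonneg : (0 : ℝ) ≤ n)])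

section WeightedShift

variable {p : ℝ≥0∞} {w : ℕ → ℝ} {T : ℓ^p(ℕ, ℂ) → ℓ^p(ℕ, ℂ)}

def weightProd (w : ℕ → ℝ) (n : ℕ) : ℝ := ∏ k ∈ Finset.range n, w (k + 1)

theorem weightProd_mul_iterate_apply (hT : ∀ x n, T x n = w (n + 1) * x (n + 1))
    (x : ℓ^p(ℕ, ℂ)) (n j : ℕ) :
    (weightProd w j : ℂ) * (T^[n] x) j = weightProd w (j + n) * x (j + n) := by
  induction n generalizing x with
  | zero => rfl
  | succ n ih =>
    rw [Function.iterate_succ_apply, ih, hT, weightProd, weightProd, ← add_assoc,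
      Finset.prod_range_succ]
    push_cast
    ring

/-- `S^n` applied to the truncation of `y` to `[0, m)`, where the forward weighted shift
`S e_j = (weightProd w j / weightProd w (j + 1)) e_{j + 1}` is a right inverse of the backward
shift with weights `w`. -/
noncomputable def shiftPreimage (w : ℕ → ℝ) (n m : ℕ) (y : ℓ^p(ℕ, ℂ)) : ℓ^p(ℕ, ℂ) :=
  ∑ j ∈ Finset.range m,
    lp.single p (j + n) ((weightProd w j / weightProd w (j + n) : ℝ) * y j)

theorem iterate_sum_single_add_shiftPreimage (hT : ∀ x n, T x n = w (n + 1) * x (n + 1))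
    (hW : ∀ n, weightProd w n ≠ 0) {m n : ℕ} (hmn : m ≤ n) (u v : ℓ^p(ℕ, ℂ)) :
    T^[n] (∑ i ∈ Finset.range m, lp.single p i (u i) + shiftPreimage w n m v) =
      ∑ i ∈ Finset.range m, lp.single p i (v i) := by
  ext k
  refine mul_left_cancel₀ (Complex.ofReal_ne_zero.2 (hW k)) ?_
  rw [weightProd_mul_iterate_apply hT]
  simp only [shiftPreimage, lp.coeFn_add, lp.coeFn_sum, lp.coeFn_single, Pi.add_apply,
    Finset.sum_apply, Pi.single_apply, add_left_inj]
  rw [Finset.sum_eq_zero fun i hi => if_neg (by rw [Finset.mem_range] at hi; omega), zero_add,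
    Finset.sum_ite_eq, Finset.sum_ite_eq]
  split_ifs
  · push_cast
    field_simp [hW]
  · simp

theorem norm_shiftPreimage_le [Fact (1 ≤ p)] (n m : ℕ) (y : ℓ^p(ℕ, ℂ)) :
    ‖shiftPreimage w n m y‖ ≤
      ∑ j ∈ Finset.range m, |weightProd w j / weightProd w (j + n)| * ‖y j‖ := by
  refine (norm_sum_le _ _).trans_eq (Finset.sum_congr rfl fun j _ => ?_)
  rw [lp.norm_single (zero_lt_one.trans_le Fact.out), norm_mul, Complex.norm_real,
    Real.norm_eq_abs]

theorem tendsto_norm_shiftPreimage [Fact (1 ≤ p)]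
    (hW : Tendsto (fun n => |weightProd w n|) atTop atTop) (m : ℕ) (y : ℓ^p(ℕ, ℂ)) :
    Tendsto (fun n => ‖shiftPreimage w n m y‖) atTop (𝓝 0) := by
  refine squeeze_zero (fun _ => norm_nonneg _) (fun n => norm_shiftPreimage_le n m y) ?_
  rw [← Finset.sum_const_zero (s := Finset.range m)]
  refine tendsto_finsetSum _ fun j _ => ?_
  rw [← zero_mul ‖y j‖]
  refine Tendsto.mul_const _ ?_
  simp_rw [abs_div]
  exact tendsto_const_nhds.div_atTop
    (hW.comp (tendsto_add_atTop_nat j) |>.congr fun n => by simp [add_comm])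

theorem weightedShift_transitive [Fact (1 ≤ p)] (hp : p ≠ ⊤)
    (hT : ∀ x n, T x n = w (n + 1) * x (n + 1)) (hW₀ : ∀ n, weightProd w n ≠ 0)
    (hW : Tendsto (fun n => |weightProd w n|) atTop atTop) (U V : Set ℓ^p(ℕ, ℂ))
    (hU : IsOpen U) (hU₀ : U.Nonempty) (hV : IsOpen V) (hV₀ : V.Nonempty) :
    ∃ n, (U ∩ T^[n] ⁻¹' V).Nonempty := by
  obtain ⟨u, hu⟩ := hU₀
  obtain ⟨v, hv⟩ := hV₀
  obtain ⟨ε, hε, huU⟩ := Metric.isOpen_iff.1 hU u hu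
  obtain ⟨η, hη, hvV⟩ := Metric.isOpen_iff.1 hV v hv
  obtain ⟨m, hum, hvm⟩ :=
    (((lp.hasSum_single hp u).tendsto_sum_nat.eventually
        (Metric.ball_mem_nhds u (half_pos hε))).and
      ((lp.hasSum_single hp v).tendsto_sum_nat.eventually (Metric.ball_mem_nhds v hη))).exists
  obtain ⟨n, hn, hmn⟩ := (((tendsto_norm_shiftPreimage hW m v).eventually
    (gt_mem_nhds (half_pos hε))).and (eventually_ge_atTop m)).exists
  set z := ∑ i ∈ Finset.range m, lp.single p i (u i) + shiftPreimage w n m v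
  refine ⟨n, z, huU ?_, hvV ?_⟩
  · calc dist z u
        ≤ dist (∑ i ∈ Finset.range m, lp.single p i (u i)) u + ‖shiftPreimage w n m v‖ := by
          rw [dist_eq_norm, dist_eq_norm, add_sub_right_comm]
          exact norm_add_le _ _
      _ < ε / 2 + ε / 2 := add_lt_add hum hn
      _ = ε := add_halves ε
  · rwa [iterate_sum_single_add_shiftPreimage hT hW₀ hmn]

theorem hypercyclic_weightedShift [Fact (1 ≤ p)] (hp : p ≠ ⊤)
    (T : ℓ^p(ℕ, ℂ) →L[ℂ] ℓ^p(ℕ, ℂ)) (hT : ∀ x n, T x n = w (n + 1) * x (n + 1))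
    (hW₀ : ∀ n, weightProd w n ≠ 0) (hW : Tendsto (fun n => |weightProd w n|) atTop atTop) :
    Hypercyclic T :=
  have := lp.separableSpace (α := ℕ) (𝕜 := ℂ) hp
  exists_dense_orbit_of_transitive T.continuous (weightedShift_transitive hp hT hW₀ hW)

theorem half_lt_abs_weightProd_mul_norm [Fact (1 ≤ p)]
    (hT : ∀ x n, T x n = w (n + 1) * x (n + 1)) (x : ℓ^p(ℕ, ℂ)) (n : ℕ)
    (h : dist (T^[n] x) (lp.single p 0 1) < 1 / 2) :
    1 / 2 < |weightProd w n| * ‖x n‖ := by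
  have h₀ : (T^[n] x) 0 = weightProd w n * x n := by
    simpa [weightProd] using weightProd_mul_iterate_apply hT x n 0
  have h₁ : ‖(weightProd w n : ℂ) * x n - 1‖ < 1 / 2 := by
    rw [dist_eq_norm] at h
    refine lt_of_le_of_lt ?_ h
    have := lp.norm_apply_le_norm (zero_lt_one.trans_le Fact.out).ne' (T^[n] x - lp.single p 0 1) 0
    rwa [lp.coeFn_sub, Pi.sub_apply, lp.single_apply_self, h₀] at this
  have h₂ := norm_sub_norm_le (1 : ℂ) ((weightProd w n : ℂ) * x n)
  rw [norm_one, norm_sub_rev, norm_mul, Complex.norm_real, Real.norm_eq_abs] at h₂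
  linarith

theorem weightProd_eq_log_div_log
    (hw : ∀ k : ℕ, 1 ≤ k → w k = Real.log (k + 2) / Real.log (k + 1)) (n : ℕ) :
    weightProd w n = Real.log (n + 2) / Real.log 2 := by
  induction n with
  | zero => simp [weightProd, div_self (Real.log_pos one_lt_two).ne']
  | succ n ih =>
    rw [weightProd, Finset.prod_range_succ, ← weightProd, ih, hw _ n.succ_pos]
    have := Real.log_natCast_add_two_pos n
    push_cast
    rw [show (n : ℝ) + 1 + 1 = n + 2 by ring]
    field_simp

end WeightedShift

theorem exists_pos_mul_le_ncard_of_qLowerDensity_pos {q : ℕ} {A : Set ℕ}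
    (hA : 0 < qLowerDensity q A) :
    ∃ δ : ℝ, 0 < δ ∧ ∀ᶠ N : ℕ in atTop, δ * N ≤ {n ∈ A | n ≤ N ^ q}.ncard := by
  obtain ⟨δ, hδ, hδA⟩ := ENNReal.lt_iff_exists_nnreal_btwn.1 hA
  refine ⟨δ, mod_cast hδ, ?_⟩
  filter_upwards [eventually_lt_of_lt_liminf hδA, eventually_gt_atTop 0] with N hN hN₀
  rw [ENNReal.lt_div_iff_mul_lt (by simp [hN₀.ne']) (by simp)] at hN
  exact_mod_cast hN.le

theorem log_add_two_le_succ_mul_log {q N n : ℕ} (hN : 3 ≤ N) (hn : n ≤ N ^ q) :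
    Real.log (n + 2) ≤ (q + 1) * Real.log N := by
  have hN' : (3 : ℝ) ≤ N := mod_cast hN
  rw [show ((q : ℝ) + 1) = ((q + 1 : ℕ) : ℝ) by push_cast; ring, ← Real.log_pow]
  refine Real.log_le_log (by positivity) ?_
  calc (n : ℝ) + 2 ≤ N ^ q + 2 := by gcongr; exact_mod_cast hn
    _ ≤ N ^ q * 3 := by linarith [one_le_pow₀ (M₀ := ℝ) (n := q) (by linarith : (1 : ℝ) ≤ N)]
    _ ≤ N ^ (q + 1) := by rw [pow_succ]; gcongr

theorem Real.tendsto_div_log_atTop : Tendsto (fun x : ℝ => x / Real.log x) atTop atTop := by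
  have h := Real.tendsto_pow_log_div_mul_add_atTop 1 0 1 one_ne_zero
  simp only [pow_one, one_mul, add_zero] at h
  have hpos : ∀ᶠ x : ℝ in atTop, 0 < Real.log x / x := by
    filter_upwards [eventually_gt_atTop 1] with x hx
    exact div_pos (Real.log_pos hx) (by linarith)
  convert (tendsto_nhdsWithin_iff.2 ⟨h, hpos⟩).inv_tendsto_nhdsGT_zero using 1
  ext x
  simp

theorem not_summable_indicator_inv_log_of_qLowerDensity_pos {q : ℕ} {A : Set ℕ}
    (hA : 0 < qLowerDensity q A) :
    ¬ Summable (A.indicator fun n : ℕ => (Real.log (n + 2))⁻¹) := by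
  intro hs
  set S := ∑' n, A.indicator (fun n : ℕ => (Real.log (n + 2))⁻¹) n
  obtain ⟨δ, hδ, hcard⟩ := exists_pos_mul_le_ncard_of_qLowerDensity_pos hA
  have hlow : ∀ᶠ N : ℕ in atTop, δ * N ≤ (q + 1) * Real.log N * S := by
    filter_upwards [hcard, eventually_ge_atTop 3] with N hN hN₃
    have hfin : {n ∈ A | n ≤ N ^ q}.Finite := (finite_Iic (N ^ q)).subset fun n hn => hn.2
    calc δ * N ≤ hfin.toFinset.card := by rwa [← ncard_eq_toFinset_card _ hfin]
      _ = ∑ n ∈ hfin.toFinset, 1 := by simp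
      _ ≤ ∑ n ∈ hfin.toFinset, (q + 1) * Real.log N * (Real.log (n + 2))⁻¹ := by
        refine Finset.sum_le_sum fun n hn => ?_
        rw [← div_eq_mul_inv, one_le_div (Real.log_natCast_add_two_pos n)]
        exact log_add_two_le_succ_mul_log hN₃ (hfin.mem_toFinset.1 hn).2
      _ = (q + 1) * Real.log N *
            ∑ n ∈ hfin.toFinset, A.indicator (fun n : ℕ => (Real.log (n + 2))⁻¹) n := by
        rw [Finset.mul_sum]
        exact Finset.sum_congr rfl fun n hn => by
          rw [indicator_of_mem (hfin.mem_toFinset.1 hn).1]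
      _ ≤ (q + 1) * Real.log N * S := by
        gcongr
        exact hs.sum_le_tsum _ fun n _ =>
          indicator_nonneg (fun n _ => (inv_pos.2 (Real.log_natCast_add_two_pos n)).le) n
  obtain ⟨N, hN, hNS, hN₃⟩ := (hlow.and (((Real.tendsto_div_log_atTop.comp
    tendsto_natCast_atTop_atTop).eventually_gt_atTop ((q + 1) * S / δ)).and
      (eventually_ge_atTop 3))).exists
  have hlogN : 0 < Real.log N := Real.log_pos (by exact_mod_cast (by omega : 1 < N))
  rw [Function.comp_apply, div_lt_div_iff₀ hδ hlogN] at hNS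
  linarith

theorem not_qFrequentlyHypercyclic_weightedShift {w : ℕ → ℝ} {T : ℓ¹(ℕ, ℂ) → ℓ¹(ℕ, ℂ)}
    (hT : ∀ x n, T x n = w (n + 1) * x (n + 1)) {C : ℝ}
    (hC : ∀ n : ℕ, |weightProd w n| ≤ C * Real.log (n + 2)) (q : ℕ) :
    ¬ qFrequentlyHypercyclic q T := by
  have hC₀ : 0 ≤ C := by
    have h₀ := (abs_nonneg _).trans (hC 0)
    have := Real.log_natCast_add_two_pos 0
    nlinarith
  rintro ⟨x, hx⟩
  refine not_summable_indicator_inv_log_of_qLowerDensity_pos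
    (hx (Metric.ball (lp.single 1 0 1) (1 / 2)) Metric.isOpen_ball
      ⟨_, Metric.mem_ball_self one_half_pos⟩) <|
    .of_nonneg_of_le
      (fun n => indicator_nonneg (fun n _ => (inv_pos.2 (Real.log_natCast_add_two_pos n)).le) n)
      (fun n => indicator_apply_le' (fun hn => ?_) fun _ => by positivity)
      ((lp.memℓp x).summable_of_one.norm.mul_left (2 * C))
  have h := (half_lt_abs_weightProd_mul_norm hT x n hn).trans_le
    (mul_le_mul_of_nonneg_right (hC n) (norm_nonneg _))
  rw [inv_le_iff_one_le_mul₀ (Real.log_natCast_add_two_pos n)]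
  linarith

/-- The unilateral weighted backward shift on `ℓ¹` with weights
`w k = ln(k+2)/ln(k+1)` (so `(B_w x)_n = w_{n+1} x_{n+1}`) is hypercyclic, but it is not
`q`-frequently hypercyclic in the norm topology for any positive integer `q`. -/
theorem hypercyclic_not_qFrequentlyHypercyclic_log_shift
    (w : ℕ → ℝ) (hw : ∀ k : ℕ, 1 ≤ k → w k = Real.log (k + 2) / Real.log (k + 1))
    (T : lp (fun _ : ℕ => ℂ) 1 →L[ℂ] lp (fun _ : ℕ => ℂ) 1)
    (hT : ∀ (x : lp (fun _ : ℕ => ℂ) 1) (n : ℕ), T x n = (w (n + 1) : ℂ) * x (n + 1)) :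
    Hypercyclic (fun x => T x) ∧
      ∀ q : ℕ, 1 ≤ q → ¬ qFrequentlyHypercyclic q (fun x => T x) := by
  have hlog2 : 0 < Real.log 2 := Real.log_pos one_lt_two
  have hW := weightProd_eq_log_div_log hw
  have hW₀ : ∀ n, 0 < weightProd w n := fun n =>
    hW n ▸ div_pos (Real.log_natCast_add_two_pos n) hlog2
  have habsW : ∀ n : ℕ, |weightProd w n| = (Real.log 2)⁻¹ * Real.log (n + 2) := fun n => by
    rw [abs_of_pos (hW₀ n), hW, div_eq_inv_mul]
  refine ⟨hypercyclic_weightedShift (by simp) T hT (fun n => (hW₀ n).ne') ?_,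
    fun q _ => not_qFrequentlyHypercyclic_weightedShift hT (fun n => (habsW n).le) q⟩
  simp_rw [habsW]
  exact (Real.tendsto_log_atTop.comp (tendsto_atTop_add_const_right _ 2
    tendsto_natCast_atTop_atTop)).const_mul_atTop (inv_pos.2 hlog2)
end

section
/- Let (N_k)_{k≥1} be a strictly increasing sequence of natural numbers. Then there exists a sequence (J_k)_{k≥1} of pairwise disjoint subsets of ℕ such that: (1) each J_k has positive lower density; (2) |n − m| ≥ N_k + N_p whenever n ≠ m, n ∈ J_k and m ∈ J_p; and (3) n ≥ N_k for every n ∈ J_k and every k ≥ 1. -/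
/-!
Weight level `p` by `u p = N p + 1` and give each integer `t ≥ 1` the level `level t`, the
largest `p` with `scale p ∣ t`, where `scale p = ∏_{q < p} 2 u (q + 1)`. Place points
`spread 1 < spread 2 < ⋯` with gaps `u (level t) + u (level (t + 1))` and let `J k` be the points
of level `k`: the gaps give the separation outright. Since `2 ^ p u p ≤ u 0 · scale p`, bounding
`u (level i) ≤ ∑_{scale p ∣ i} u p` and summing over `i ≤ t` gives a geometric series times `t`,
so the points grow linearly; as level `k` contains the progression
`scale k · (2 u (k + 1) j + 1)`, each `J k` has positive lower density.
-/

open Filter Set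
open scoped ENNReal

/-- The lower density of a set `A ⊆ ℕ`: `liminf_{N→∞} card {n ∈ A : n ≤ N} / N`. -/
noncomputable def lowerDensity (A : Set ℕ) : ℝ≥0∞ :=
  Filter.atTop.liminf fun N : ℕ => (Set.ncard {n ∈ A | n ≤ N} : ℝ≥0∞) / (N : ℝ≥0∞)

theorem inv_le_lowerDensity {S : Set ℕ} {c : ℕ}
    (h : ∀ᶠ T in atTop, T ≤ c * {n ∈ S | n ≤ T}.ncard) : (c : ℝ≥0∞)⁻¹ ≤ lowerDensity S := by
  refine le_liminf_of_le (by isBoundedDefault) ?_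
  filter_upwards [h, eventually_gt_atTop 0] with T hT hT0
  have hc : c ≠ 0 := by rintro rfl; omega
  rw [ENNReal.le_div_iff_mul_le (by simp [hT0.ne']) (by simp),
    ENNReal.inv_mul_le_iff (by simpa) (by simp)]
  exact_mod_cast hT

theorem lowerDensity_pos_of_injective {S : Set ℕ} {g : ℕ → ℕ} (hg : Function.Injective g)
    (hgS : ∀ j, g j ∈ S) {A B : ℕ} (hB : 0 < B) (hgle : ∀ j, g j ≤ A + B * j) :
    0 < lowerDensity S := by
  refine (ENNReal.inv_pos.2 (ENNReal.natCast_ne_top (2 * B))).trans_le (inv_le_lowerDensity ?_)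
  filter_upwards [eventually_ge_atTop (2 * A)] with T hT
  set n := (T - A) / B + 1
  have hcount : n ≤ {m ∈ S | m ≤ T}.ncard := by
    rw [← Finset.card_range n, ← Finset.card_image_of_injective _ hg, ← Set.ncard_coe_finset]
    refine Set.ncard_le_ncard ?_ ((Set.finite_Iic T).subset fun m hm => hm.2)
    intro m hm
    obtain ⟨j, hj, rfl⟩ := Finset.mem_image.1 hm
    have hj : B * j ≤ T - A :=
      (Nat.mul_le_mul_left B (Nat.lt_succ_iff.1 (Finset.mem_range.1 hj))).trans (Nat.mul_div_le _ _)
    exact ⟨hgS j, (hgle j).trans (by omega)⟩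
  have hBn : T - A < B * n := Nat.lt_mul_div_succ _ hB
  calc T ≤ 2 * (B * n) := by omega
    _ ≤ 2 * B * {m ∈ S | m ≤ T}.ncard := by rw [← mul_assoc]; gcongr

namespace SeparatedSets

open Finset

section spread

variable (w : ℕ → ℕ)

def spread : ℕ → ℕ
  | 0 => 0
  | t + 1 => spread t + w t + w (t + 1)

variable {w}

theorem spread_add_add_le {t s : ℕ} (h : t < s) : spread w t + w t + w s ≤ spread w s := by
  induction s, h using Nat.le_induction with
  | base => rfl
  | succ s _ ih => simp only [spread]; omega

theorem le_spread {t : ℕ} (ht : 0 < t) : w t ≤ spread w t := by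
  obtain ⟨s, rfl⟩ := Nat.exists_eq_add_of_lt ht
  simp only [spread]; omega

theorem spread_strictMono (hw : ∀ t, 0 < w t) : StrictMono (spread w) :=
  strictMono_nat_of_lt_succ fun t => by simp only [spread]; linarith [hw t]

theorem le_abs_spread_sub_spread {t s : ℕ} (h : t ≠ s) :
    (w t + w s : ℤ) ≤ |(spread w t : ℤ) - spread w s| := by
  rcases h.lt_or_gt with h | h
  · have := spread_add_add_le (w := w) h
    rw [abs_sub_comm, abs_of_nonneg (by omega)]; omega
  · have := spread_add_add_le (w := w) h
    rw [abs_of_nonneg (by omega)]; omega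

theorem spread_add_le_two_mul_sum (t : ℕ) :
    spread w t + w t ≤ 2 * (w 0 + ∑ i ∈ Finset.Ioc 0 t, w i) := by
  induction t with
  | zero => simp [spread]; omega
  | succ t ih => rw [sum_Ioc_succ_top t.zero_le]; simp only [spread]; omega

end spread

section level

variable (u : ℕ → ℕ)

def scale (p : ℕ) : ℕ := ∏ q ∈ range p, 2 * u (q + 1)

def level (t : ℕ) : ℕ := Nat.findGreatest (fun p => scale u p ∣ t) t

variable {u}

theorem scale_succ (p : ℕ) : scale u (p + 1) = scale u p * (2 * u (p + 1)) := prod_range_succ _ _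

theorem scale_dvd_scale {p q : ℕ} (h : p ≤ q) : scale u p ∣ scale u q :=
  prod_dvd_prod_of_subset _ _ _ (range_subset_range.2 h)

theorem scale_level_dvd (t : ℕ) : scale u (level u t) ∣ t :=
  Nat.findGreatest_spec (P := fun p => scale u p ∣ t) (Nat.zero_le t) (by simp [scale])

theorem level_le (t : ℕ) : level u t ≤ t := Nat.findGreatest_le t

theorem two_pow_le_scale (hu : ∀ p, 0 < u p) (p : ℕ) : 2 ^ p ≤ scale u p := by
  have := pow_card_le_prod (range p) (fun q => 2 * u (q + 1)) 2 fun q _ => by linarith [hu (q + 1)]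
  rwa [card_range] at this

theorem scale_pos (hu : ∀ p, 0 < u p) (p : ℕ) : 0 < scale u p :=
  lt_of_lt_of_le (by positivity) (two_pow_le_scale hu p)

theorem scale_dvd_iff_le_level (hu : ∀ p, 0 < u p) {p t : ℕ} (ht : 0 < t) :
    scale u p ∣ t ↔ p ≤ level u t := by
  refine ⟨fun h => Nat.le_findGreatest ?_ h, fun h => (scale_dvd_scale h).trans (scale_level_dvd t)⟩
  calc p ≤ 2 ^ p := Nat.lt_two_pow_self.le
    _ ≤ scale u p := two_pow_le_scale hu p
    _ ≤ t := Nat.le_of_dvd ht h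

theorem level_eq_iff (hu : ∀ p, 0 < u p) {k t : ℕ} (ht : 0 < t) :
    level u t = k ↔ scale u k ∣ t ∧ ¬ scale u (k + 1) ∣ t := by
  rw [scale_dvd_iff_le_level hu ht, scale_dvd_iff_le_level hu ht]
  omega

theorem level_scale_mul (hu : ∀ p, 0 < u p) (k j : ℕ) :
    level u (scale u k * (2 * u (k + 1) * j + 1)) = k := by
  refine (level_eq_iff hu (Nat.mul_pos (scale_pos hu k) (Nat.succ_pos _))).2 ⟨dvd_mul_right _ _, ?_⟩
  rw [scale_succ]
  intro h
  have h1 : 2 * u (k + 1) ∣ 1 :=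
    (Nat.dvd_add_right (dvd_mul_right _ j)).1 (Nat.dvd_of_mul_dvd_mul_left (scale_pos hu k) h)
  linarith [hu (k + 1), Nat.le_of_dvd one_pos h1]

theorem two_pow_mul_le_scale (hu : ∀ p, 0 < u p) : ∀ p, 2 ^ p * u p ≤ u 0 * scale u p
  | 0 => by simp [scale, mul_comm]
  | p + 1 => by
    rw [scale_succ, pow_succ]
    have hscale := two_pow_le_scale hu p
    calc 2 ^ p * 2 * u (p + 1) ≤ u 0 * (2 ^ p * 2 * u (p + 1)) := Nat.le_mul_of_pos_left _ (hu 0)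
      _ ≤ u 0 * (scale u p * (2 * u (p + 1))) := by rw [mul_assoc (2 ^ p)]; gcongr

theorem mul_div_scale_le (hu : ∀ p, 0 < u p) (p t : ℕ) :
    u p * (t / scale u p) ≤ u 0 * t / 2 ^ p := by
  rw [Nat.le_div_iff_mul_le (by positivity)]
  calc u p * (t / scale u p) * 2 ^ p = 2 ^ p * u p * (t / scale u p) := by ring
    _ ≤ u 0 * scale u p * (t / scale u p) := Nat.mul_le_mul_right _ (two_pow_mul_le_scale hu p)
    _ ≤ u 0 * t := by rw [mul_assoc]; gcongr; exact Nat.mul_div_le t _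

theorem sum_level_le (hu : ∀ p, 0 < u p) (t : ℕ) :
    ∑ i ∈ Finset.Ioc 0 t, u (level u i) ≤ 2 * u 0 * t := by
  have hterm : ∀ i ∈ Finset.Ioc 0 t,
      u (level u i) ≤ ∑ p ∈ range (t + 1) with scale u p ∣ i, u p := by
    intro i hi
    refine single_le_sum (fun _ _ => Nat.zero_le _) (mem_filter.2 ⟨?_, scale_level_dvd i⟩)
    exact mem_range.2 (Nat.lt_succ_of_le ((level_le i).trans (Finset.mem_Ioc.1 hi).2))
  calc ∑ i ∈ Finset.Ioc 0 t, u (level u i)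
      ≤ ∑ i ∈ Finset.Ioc 0 t, ∑ p ∈ range (t + 1) with scale u p ∣ i, u p := sum_le_sum hterm
    _ = ∑ p ∈ range (t + 1), u p * (t / scale u p) := by
      simp_rw [sum_filter]
      rw [sum_comm]
      refine sum_congr rfl fun p _ => ?_
      rw [← sum_filter, sum_const, Nat.Ioc_filter_dvd_card_eq_div, smul_eq_mul, mul_comm]
    _ ≤ ∑ p ∈ range (t + 1), u 0 * t / 2 ^ p := sum_le_sum fun p _ => mul_div_scale_le hu p t
    _ ≤ u 0 * t * 2 / (2 - 1) := Nat.geom_sum_le le_rfl _ _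
    _ = 2 * u 0 * t := by rw [Nat.div_one]; ring

theorem spread_level_le (hu : ∀ p, 0 < u p) (t : ℕ) :
    spread (u ∘ level u) t ≤ 2 * u 0 * (2 * t + 1) := by
  have h := spread_add_le_two_mul_sum (w := u ∘ level u) t
  have hsum := sum_level_le hu t
  have h0 : level u 0 = 0 := Nat.findGreatest_zero
  simp only [Function.comp_apply, h0] at h
  linarith

end level

def packing (u : ℕ → ℕ) (k : ℕ) : Set ℕ := spread (u ∘ level u) '' {t | 0 < t ∧ level u t = k}

variable {u : ℕ → ℕ}

theorem pairwise_disjoint_packing (hu : ∀ p, 0 < u p) :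
    Pairwise fun k p => Disjoint (packing u k) (packing u p) := by
  intro k p hkp
  refine Set.disjoint_left.2 ?_
  rintro _ ⟨t, ⟨-, rfl⟩, rfl⟩ ⟨s, ⟨-, rfl⟩, hst⟩
  exact hkp (congrArg (level u) ((spread_strictMono fun t => hu _).injective hst).symm)

theorem le_abs_sub_of_mem_packing {k p n m : ℕ} (hn : n ∈ packing u k) (hm : m ∈ packing u p)
    (hnm : n ≠ m) : (u k + u p : ℤ) ≤ |(n : ℤ) - m| := by
  obtain ⟨t, ⟨-, rfl⟩, rfl⟩ := hn
  obtain ⟨s, ⟨-, rfl⟩, rfl⟩ := hm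
  exact le_abs_spread_sub_spread (w := u ∘ level u) fun h => hnm (h ▸ rfl)

theorem le_of_mem_packing {k n : ℕ} (hn : n ∈ packing u k) : u k ≤ n := by
  obtain ⟨t, ⟨ht, rfl⟩, rfl⟩ := hn
  exact le_spread (w := u ∘ level u) ht

theorem lowerDensity_packing_pos (hu : ∀ p, 0 < u p) (k : ℕ) : 0 < lowerDensity (packing u k) := by
  set M := scale u k
  have hM : 0 < M := scale_pos hu k
  have hindex : StrictMono fun j => M * (2 * u (k + 1) * j + 1) := fun i j hij =>
    Nat.mul_lt_mul_of_pos_left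
      (Nat.succ_lt_succ (Nat.mul_lt_mul_of_pos_left hij (by linarith [hu (k + 1)]))) hM
  refine lowerDensity_pos_of_injective ((spread_strictMono fun t => hu _).comp hindex).injective
    (fun j => ⟨_, ⟨Nat.mul_pos hM (Nat.succ_pos _), level_scale_mul hu k j⟩, rfl⟩)
    (A := 2 * u 0 * (2 * M + 1)) (B := 8 * u 0 * M * u (k + 1))
    (by have := hu 0; have := hu (k + 1); positivity) fun j => ?_
  exact (spread_level_le hu _).trans_eq (by ring)

end SeparatedSets

open SeparatedSets in
theorem exists_disjoint_sets_of_positive_lowerDensity_general (N : ℕ → ℕ) :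
    ∃ J : ℕ → Set ℕ,
      (Pairwise fun k p => Disjoint (J k) (J p)) ∧
      (∀ k, 0 < lowerDensity (J k)) ∧
      (∀ k p : ℕ, ∀ n ∈ J k, ∀ m ∈ J p, n ≠ m → (N k + N p : ℤ) ≤ |(n : ℤ) - (m : ℤ)|) ∧
      (∀ k, ∀ n ∈ J k, N k ≤ n) := by
  have hu : ∀ p, 0 < N p + 1 := fun p => Nat.succ_pos _
  refine ⟨packing (N · + 1), pairwise_disjoint_packing hu, lowerDensity_packing_pos hu,
    fun k p n hn m hm hnm => ?_, fun k n hn => (le_of_mem_packing hn).trans' (Nat.le_succ _)⟩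
  have hsep := le_abs_sub_of_mem_packing hn hm hnm
  push_cast at hsep
  linarith

/-- Given a strictly increasing sequence `(N_k)` of natural numbers, there is a pairwise
disjoint sequence `(J_k)` of subsets of `ℕ` such that each `J_k` has positive lower
density, `|n - m| ≥ N_k + N_p` whenever `n ≠ m`, `n ∈ J_k`, `m ∈ J_p`, and `n ≥ N_k`
for every `n ∈ J_k`. -/
theorem exists_disjoint_sets_of_positive_lowerDensity (N : ℕ → ℕ) (hN : StrictMono N) :
    ∃ J : ℕ → Set ℕ,
      (Pairwise fun k p => Disjoint (J k) (J p)) ∧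
      (∀ k, 0 < lowerDensity (J k)) ∧
      (∀ k p : ℕ, ∀ n ∈ J k, ∀ m ∈ J p, n ≠ m → (N k + N p : ℤ) ≤ |(n : ℤ) - (m : ℤ)|) ∧
      (∀ k, ∀ n ∈ J k, N k ≤ n) :=
  exists_disjoint_sets_of_positive_lowerDensity_general N
end
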